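/- arXiv:2506.09598 — 2 statements merged into one kernel-verified Lean document; each statement's English description precedes it below -/
import Mathlib

section
/- Let c ≥ 2 and let (λ, μ) be a codimension-c decoration with k = ∑μⱼ. Then every part of λ satisfies λᵢ ≤ k. -/
/-- Sort a list of integers in non-increasing order. -/
def rsort (l : List ℤ) : List ℤ := List.insertionSort (· ≥ ·) l

/-- Remove all non-positive parts (trailing zeros) from a partition. -/
def strip (l : List ℤ) : List ℤ := l.filter (fun x => 0 < x)

/-- The smallest minimal link of a codimension-`c` pair of partitions `(λ, μ)`:
choose the `c` largest parts of `λ` (padding with zeros if needed), shift them by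
`p = (c-2)k + 1 - (λ₁ + ⋯ + λ_c)` where `k = ∑ μⱼ`, merge with `μ` and re-sort;
the other partition becomes `(λ_{c+1}, …, λ_b)`. -/
def smlink (c : ℕ) (P : List ℤ × List ℤ) : List ℤ × List ℤ :=
  let p : ℤ := ((c : ℤ) - 2) * P.2.sum + 1 - (P.1.take c).sum
  (strip (rsort ((P.1.take c ++ List.replicate (c - P.1.length) 0).map (· + p) ++ P.2)),
   strip (P.1.drop c))

/-- The smallest minimal link of `P` produces nonnegative parts, i.e. `λ_c + p ≥ 0`. -/
def ValidLink (c : ℕ) (P : List ℤ × List ℤ) : Prop :=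
  0 ≤ P.1.getD (c - 1) 0 + (((c : ℤ) - 2) * P.2.sum + 1 - (P.1.take c).sum)

/-- A partition: a non-increasing list of positive integers. -/
def IsPartition (l : List ℤ) : Prop := l.Pairwise (· ≥ ·) ∧ ∀ x ∈ l, 0 < x

/-- A codimension-`c` decoration: a pair of partitions reachable to the complete
intersection pair `((1^c), (1))` by finitely many smallest minimal links, all of
whose intermediate links are valid (have nonnegative parts). -/
def IsDecoration (c : ℕ) (P : List ℤ × List ℤ) : Prop :=
  IsPartition P.1 ∧ IsPartition P.2 ∧
  ∃ n : ℕ, (∀ m < n, ValidLink c ((smlink c)^[m] P)) ∧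
    (smlink c)^[n] P = (List.replicate c 1, [1])

/-!
Along a chain of smallest minimal links down to `((1^c), (1))` the sums obey
`∑λ = (c-1)k + 1`, because this holds at the complete intersection and the relation
propagates backwards through every valid link. For the bound, let `a = λ₁` and let `p` be the
shift of the link, whose new level is `k' = ∑λ - (λ₁ + ⋯ + λ_c) ≥ 0`. Either `a + p ≤ 0`, or
`a + p` is a part of the new first partition; in both cases `a + p ≤ k'` by induction, and
substituting `p` and `∑λ = (c-1)k + 1` turns this into `a ≤ k`.
-/

def topParts (c : ℕ) (l : List ℤ) : List ℤ := l.take c ++ List.replicate (c - l.length) 0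

/-- The shift `p` of the smallest minimal link. -/
def linkShift (c : ℕ) (P : List ℤ × List ℤ) : ℤ := ((c : ℤ) - 2) * P.2.sum + 1 - (P.1.take c).sum

lemma smlink_fst (c : ℕ) (P : List ℤ × List ℤ) :
    (smlink c P).1 = strip (rsort ((topParts c P.1).map (· + linkShift c P) ++ P.2)) := rfl

lemma smlink_snd (c : ℕ) (P : List ℤ × List ℤ) : (smlink c P).2 = strip (P.1.drop c) := rfl

lemma perm_rsort (l : List ℤ) : (rsort l).Perm l := List.perm_insertionSort _ _

lemma validLink_iff (c : ℕ) (P : List ℤ × List ℤ) :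
    ValidLink c P ↔ 0 ≤ P.1.getD (c - 1) 0 + linkShift c P := Iff.rfl

lemma sum_strip_of_nonneg {l : List ℤ} (h : ∀ x ∈ l, 0 ≤ x) : (strip l).sum = l.sum := by
  induction l with
  | nil => rfl
  | cons a t ih =>
    have ht := ih fun x hx => h x (List.mem_cons_of_mem _ hx)
    rcases (h a List.mem_cons_self).lt_or_eq with ha | rfl <;> simp_all [strip]

lemma length_topParts (c : ℕ) (l : List ℤ) : (topParts c l).length = c := by
  simp only [topParts, List.length_append, List.length_take, List.length_replicate]
  omega

lemma sum_topParts (c : ℕ) (l : List ℤ) : (topParts c l).sum = (l.take c).sum := by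
  simp [topParts, List.sum_replicate]

lemma IsPartition.getD_le_of_mem_topParts {l : List ℤ} (hl : IsPartition l) {c : ℕ} {a : ℤ}
    (ha : a ∈ topParts c l) : l.getD (c - 1) 0 ≤ a := by
  rcases lt_or_ge l.length c with hlen | hlen
  · rw [List.getD_eq_default _ _ (by omega)]
    rcases List.mem_append.mp ha with ha | ha
    · exact (hl.2 a (List.mem_of_mem_take ha)).le
    · exact (List.eq_of_mem_replicate ha).ge
  · rw [topParts, Nat.sub_eq_zero_of_le hlen, List.replicate_zero, List.append_nil] at ha
    obtain ⟨i, hi, rfl⟩ := List.mem_iff_getElem.mp ha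
    rw [List.length_take] at hi
    rw [List.getElem_take, List.getD_eq_getElem _ _ (by omega)]
    simpa using hl.1.rel_get_of_le (a := ⟨i, by omega⟩) (b := ⟨c - 1, by omega⟩) (by simp; omega)

lemma IsPartition.exists_mem_topParts_ge {l : List ℤ} (hl : IsPartition l) {c : ℕ} (hc : c ≠ 0)
    {x : ℤ} (hx : x ∈ l) : ∃ a ∈ topParts c l, x ≤ a := by
  obtain ⟨a, t, rfl⟩ := List.exists_cons_of_ne_nil (List.ne_nil_of_mem hx)
  obtain ⟨c, rfl⟩ := Nat.exists_eq_succ_of_ne_zero hc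
  refine ⟨a, List.mem_append_left _ (by simp), ?_⟩
  rcases List.mem_cons.mp hx with rfl | hxt
  · exact le_rfl
  · exact (List.pairwise_cons.mp hl.1).1 x hxt

lemma isPartition_strip_of_pairwise {l : List ℤ} (hl : l.Pairwise (· ≥ ·)) :
    IsPartition (strip l) :=
  ⟨hl.filter _, fun x hx => by simpa using List.of_mem_filter hx⟩

lemma isPartition_smlink_fst (c : ℕ) (P : List ℤ × List ℤ) : IsPartition (smlink c P).1 :=
  isPartition_strip_of_pairwise (List.pairwise_insertionSort _ _)

lemma isPartition_smlink_snd {P : List ℤ × List ℤ} (h : IsPartition P.1) (c : ℕ) :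
    IsPartition (smlink c P).2 :=
  isPartition_strip_of_pairwise (h.1.sublist (List.drop_sublist _ _))

lemma sum_smlink_snd {P : List ℤ × List ℤ} (h : IsPartition P.1) (c : ℕ) :
    (smlink c P).2.sum = P.1.sum - (P.1.take c).sum := by
  rw [smlink_snd, sum_strip_of_nonneg fun x hx => (h.2 x (List.mem_of_mem_drop hx)).le,
    ← P.1.sum_take_add_sum_drop c]
  ring

lemma sum_smlink_fst {c : ℕ} {P : List ℤ × List ℤ} (h₁ : IsPartition P.1)
    (h₂ : IsPartition P.2) (hv : ValidLink c P) :
    (smlink c P).1.sum = (P.1.take c).sum + c * linkShift c P + P.2.sum := by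
  have hnonneg : ∀ x ∈ (topParts c P.1).map (· + linkShift c P) ++ P.2, 0 ≤ x := by
    intro x hx
    rcases List.mem_append.mp hx with hx | hx
    · obtain ⟨a, ha, rfl⟩ := List.mem_map.mp hx
      have := h₁.getD_le_of_mem_topParts ha
      rw [validLink_iff] at hv
      linarith
    · exact (h₂.2 x hx).le
  have hperm := perm_rsort ((topParts c P.1).map (· + linkShift c P) ++ P.2)
  rw [smlink_fst, sum_strip_of_nonneg fun x hx => hnonneg x (hperm.mem_iff.mp hx), hperm.sum_eq]
  simp [List.sum_map_add, length_topParts, sum_topParts]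

lemma add_linkShift_mem_smlink_fst {c : ℕ} {P : List ℤ × List ℤ} {a : ℤ}
    (ha : a ∈ topParts c P.1) (hpos : 0 < a + linkShift c P) :
    a + linkShift c P ∈ (smlink c P).1 := by
  rw [smlink_fst]
  refine List.mem_filter.mpr ⟨?_, by simpa using hpos⟩
  exact (perm_rsort _).mem_iff.mpr
    (List.mem_append_left _ (List.mem_map.mpr ⟨a, ha, rfl⟩))

@[elab_as_elim]
theorem IsDecoration.induction {c : ℕ} {motive : List ℤ × List ℤ → Prop}
    (base : motive (List.replicate c 1, [1]))
    (step : ∀ P, IsDecoration c P → ValidLink c P → IsDecoration c (smlink c P) →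
      motive (smlink c P) → motive P)
    {P : List ℤ × List ℤ} (hP : IsDecoration c P) : motive P := by
  obtain ⟨h₁, h₂, n, hv, he⟩ := hP
  induction n generalizing P with
  | zero =>
    obtain rfl : P = _ := he
    exact base
  | succ n ih =>
    have hvalid : ∀ m < n, ValidLink c ((smlink c)^[m] (smlink c P)) := fun m hm => by
      simpa only [Function.iterate_succ_apply] using hv (m + 1) (by omega)
    have hreach : (smlink c)^[n] (smlink c P) = (List.replicate c 1, [1]) := he
    have hQ : IsDecoration c (smlink c P) :=
      ⟨isPartition_smlink_fst c P, isPartition_smlink_snd h₁ c, n, hvalid, hreach⟩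
    exact step P ⟨h₁, h₂, n + 1, hv, he⟩ (hv 0 n.succ_pos) hQ
      (ih (isPartition_smlink_fst c P) (isPartition_smlink_snd h₁ c) hvalid hreach)

theorem IsDecoration.sum_fst {c : ℕ} (hc : c ≠ 1) {P : List ℤ × List ℤ}
    (hP : IsDecoration c P) : P.1.sum = ((c : ℤ) - 1) * P.2.sum + 1 := by
  refine hP.induction (by simp [List.sum_replicate]) (fun P hP hv _ ih => ?_)
  rw [sum_smlink_fst hP.1 hP.2.1 hv, sum_smlink_snd hP.1 c, linkShift] at ih
  have hc' : (c : ℤ) - 1 ≠ 0 := sub_ne_zero.mpr (by exact_mod_cast hc)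
  refine mul_left_cancel₀ hc' ?_
  linear_combination -ih

theorem IsDecoration.le_sum_snd {c : ℕ} (hc : 2 ≤ c) {P : List ℤ × List ℤ}
    (hP : IsDecoration c P) : ∀ x ∈ P.1, x ≤ P.2.sum := by
  refine hP.induction (by simp) (fun P hP _ hQ ih => ?_)
  intro x hx
  obtain ⟨a, ha, hxa⟩ := hP.1.exists_mem_topParts_ge (c := c) (by omega) hx
  have key : a + linkShift c P ≤ (smlink c P).2.sum := by
    rcases le_or_gt (a + linkShift c P) 0 with hle | hpos
    · exact hle.trans (List.sum_nonneg fun y hy => (hQ.2.1.2 y hy).le)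
    · exact ih _ (add_linkShift_mem_smlink_fst ha hpos)
  have hsum := hP.sum_fst (by omega)
  rw [sum_smlink_snd hP.1 c, linkShift] at key
  linarith

/-- For a codimension-`c` decoration `(λ, μ)` with `k = ∑μⱼ`, every part of
`λ` satisfies `λᵢ ≤ k`. -/
theorem stmt6 (c : ℕ) (hc : 2 ≤ c) (P : List ℤ × List ℤ) (k : ℤ)
    (hk : P.2.sum = k) (h : IsDecoration c P) :
    ∀ x ∈ P.1, x ≤ k :=
  hk ▸ h.le_sum_snd hc
end

section
/- For every k ≥ 2, the pair of partitions λ = (2^{k-1},1,1,1), μ = (k-1,1) is a codimension-3 decoration. Moreover for k ≥ 4 its smallest minimal link is ((k-1, k-3, k-3, k-3, 1), (2^{k-4},1,1,1)), and the smallest minimal link of that pair is ((2^{k-3},1,1,1),(k-3,1)). -/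
theorem strip_eq_self {l : List ℤ} (h : ∀ x ∈ l, 0 < x) : strip l = l :=
  List.filter_eq_self.mpr fun x hx => by simpa using h x hx

theorem strip_append (l l' : List ℤ) : strip (l ++ l') = strip l ++ strip l' :=
  List.filter_append _ _

theorem strip_rsort_eq {l l' : List ℤ} (hp : (strip l).Perm l') (hs : l'.Pairwise (· ≥ ·)) :
    strip (rsort l) = l' :=
  List.Perm.eq_of_pairwise' ((List.pairwise_insertionSort _ l).filter _) hs
    (((List.perm_insertionSort _ l).filter _).trans hp)

def LinksToCI (c : ℕ) (P : List ℤ × List ℤ) : Prop :=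
  ∃ n : ℕ, (∀ m < n, ValidLink c ((smlink c)^[m] P)) ∧
    (smlink c)^[n] P = (List.replicate c 1, [1])

theorem linksToCI_ci (c : ℕ) : LinksToCI c (List.replicate c 1, [1]) :=
  ⟨0, nofun, rfl⟩

theorem LinksToCI.of_smlink {c : ℕ} {P : List ℤ × List ℤ} (hv : ValidLink c P)
    (h : LinksToCI c (smlink c P)) : LinksToCI c P := by
  obtain ⟨n, hvalid, hci⟩ := h
  refine ⟨n + 1, fun m hm => ?_, hci⟩
  cases m with
  | zero => exact hv
  | succ m => exact hvalid m (by omega)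

def familyPair (n : ℕ) : List ℤ × List ℤ :=
  (List.replicate n 2 ++ [1, 1, 1], [(n : ℤ), 1])

/-- The intermediate pair of the theorem for `k = m + 4`. -/
def familyLink (m : ℕ) : List ℤ × List ℤ :=
  ([(m : ℤ) + 3, (m : ℤ) + 1, (m : ℤ) + 1, (m : ℤ) + 1, 1], List.replicate m 2 ++ [1, 1, 1])

theorem isPartition_replicate_two_append (n : ℕ) :
    IsPartition (List.replicate n (2 : ℤ) ++ [1, 1, 1]) := by
  refine ⟨List.pairwise_append.mpr ⟨List.pairwise_replicate.mpr (.inr le_rfl), by decide, ?_⟩,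
    ?_⟩
  · intro x hx y hy
    rw [List.eq_of_mem_replicate hx]
    simp only [List.mem_cons, List.not_mem_nil, or_false] at hy
    omega
  · intro x hx
    simp only [List.mem_append, List.mem_replicate, List.mem_cons, List.not_mem_nil,
      or_false] at hx
    omega

theorem validLink_familyPair {n : ℕ} (hn : 1 ≤ n) : ValidLink 3 (familyPair n) := by
  obtain rfl | rfl | ⟨m, rfl⟩ : n = 1 ∨ n = 2 ∨ ∃ m, n = m + 3 := by
    rcases n with _ | _ | _ | m <;> simp_all
  · simp [ValidLink, familyPair]
  · simp [ValidLink, familyPair]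
  · simp [ValidLink, familyPair, List.replicate_succ]
    omega

theorem validLink_familyLink (m : ℕ) : ValidLink 3 (familyLink m) := by
  simp [ValidLink, familyLink]
  omega

theorem smlink_familyPair_one : smlink 3 (familyPair 1) = (List.replicate 3 1, [1]) := by
  decide

theorem smlink_familyPair_two : smlink 3 (familyPair 2) = familyPair 1 := by
  decide

theorem smlink_three_cons {a b c p : ℤ} {rest μ : List ℤ} (hp : μ.sum + 1 - (a + b + c) = p) :
    smlink 3 (a :: b :: c :: rest, μ) =
      (strip (rsort ([a + p, b + p, c + p] ++ μ)), strip rest) := by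
  subst hp
  simp only [smlink, List.take, List.drop, List.length_cons, List.sum_cons, List.sum_nil]
  norm_num [add_assoc]

theorem smlink_familyPair (m : ℕ) : smlink 3 (familyPair (m + 3)) = familyLink m := by
  have hpos : (0 : ℤ) < m + 1 := by positivity
  simp only [familyPair, familyLink, List.replicate_succ, List.cons_append]
  rw [smlink_three_cons (p := m - 1) (by simp; ring), show (2 : ℤ) + (m - 1) = m + 1 by ring]
  refine Prod.ext (strip_rsort_eq ?_ ?_) (strip_eq_self (isPartition_replicate_two_append m).2)
  · rw [strip_eq_self (by simp; omega)]
    push_cast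
    exact List.perm_middle (l₁ := [(m : ℤ) + 1, m + 1, m + 1]) (l₂ := [1])
  · simp
    omega

theorem smlink_familyLink (m : ℕ) : smlink 3 (familyLink m) = familyPair (m + 1) := by
  simp only [familyPair, familyLink]
  rw [smlink_three_cons (p := -(m + 1)) (by simp; ring)]
  rw [show (m : ℤ) + 3 + -(m + 1) = 2 by ring, show (m : ℤ) + 1 + -(m + 1) = 0 by ring]
  refine Prod.ext (strip_rsort_eq ?_ (isPartition_replicate_two_append (m + 1)).1) ?_
  · rw [strip_append, strip_eq_self (isPartition_replicate_two_append m).2]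
    rfl
  · push_cast
    exact strip_eq_self (by simp)

theorem linksToCI_familyPair {n : ℕ} (hn : 1 ≤ n) : LinksToCI 3 (familyPair n) := by
  have hstep : ∀ m, LinksToCI 3 (familyPair (m + 1)) → LinksToCI 3 (familyPair (m + 3)) :=
    fun m h => .of_smlink (validLink_familyPair (by omega)) <| smlink_familyPair m ▸
      .of_smlink (validLink_familyLink m) (smlink_familyLink m ▸ h)
  have h1 : LinksToCI 3 (familyPair 1) :=
    .of_smlink (validLink_familyPair le_rfl) (smlink_familyPair_one ▸ linksToCI_ci 3)
  have h2 : LinksToCI 3 (familyPair 2) :=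
    .of_smlink (validLink_familyPair (by norm_num)) (smlink_familyPair_two ▸ h1)
  induction n using Nat.strong_induction_on with
  | _ n ih =>
    obtain rfl | rfl | ⟨m, rfl⟩ : n = 1 ∨ n = 2 ∨ ∃ m, n = m + 3 := by
      rcases n with _ | _ | _ | m <;> simp_all
    exacts [h1, h2, hstep m (ih (m + 1) (by omega) (by omega))]

theorem isDecoration_familyPair {n : ℕ} (hn : 1 ≤ n) : IsDecoration 3 (familyPair n) :=
  ⟨isPartition_replicate_two_append n,
    ⟨by simpa [familyPair] using hn, by simp [familyPair]; omega⟩, linksToCI_familyPair hn⟩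

/-- For every `k ≥ 2`, the pair `λ = (2^{k-1},1,1,1)`, `μ = (k-1,1)` is a
codimension-3 decoration. Moreover for `k ≥ 4` its smallest minimal link is
`((k-1, k-3, k-3, k-3, 1), (2^{k-4},1,1,1))`, and the smallest minimal link of
that pair is `((2^{k-3},1,1,1), (k-3,1))`. -/
theorem stmt8 (k : ℕ) (hk : 2 ≤ k) :
    IsDecoration 3 (List.replicate (k - 1) (2 : ℤ) ++ [1, 1, 1], [(k : ℤ) - 1, 1]) ∧
    (4 ≤ k →
      smlink 3 (List.replicate (k - 1) (2 : ℤ) ++ [1, 1, 1], [(k : ℤ) - 1, 1])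
        = ([(k : ℤ) - 1, (k : ℤ) - 3, (k : ℤ) - 3, (k : ℤ) - 3, 1],
           List.replicate (k - 4) (2 : ℤ) ++ [1, 1, 1]) ∧
      smlink 3 ([(k : ℤ) - 1, (k : ℤ) - 3, (k : ℤ) - 3, (k : ℤ) - 3, 1],
           List.replicate (k - 4) (2 : ℤ) ++ [1, 1, 1])
        = (List.replicate (k - 3) (2 : ℤ) ++ [1, 1, 1], [(k : ℤ) - 3, 1])) := by
  have hP : (List.replicate (k - 1) (2 : ℤ) ++ [1, 1, 1], [(k : ℤ) - 1, 1])
      = familyPair (k - 1) := by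
    simp [familyPair, Nat.cast_sub (by omega : 1 ≤ k)]
  refine ⟨hP ▸ isDecoration_familyPair (by omega), fun hk4 => ?_⟩
  obtain ⟨m, rfl⟩ : ∃ m, k = m + 4 := ⟨k - 4, by omega⟩
  have hL : ([((m + 4 : ℕ) : ℤ) - 1, (m + 4 : ℕ) - 3, (m + 4 : ℕ) - 3, (m + 4 : ℕ) - 3,
      1], List.replicate (m + 4 - 4) (2 : ℤ) ++ [1, 1, 1]) = familyLink m := by
    simp [familyLink]
    constructor <;> ring
  have hP' : (List.replicate (m + 4 - 3) (2 : ℤ) ++ [1, 1, 1], [((m + 4 : ℕ) : ℤ) - 3, 1])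
      = familyPair (m + 1) := by
    simp [familyPair]
    ring
  rw [hP, hL, hP']
  exact ⟨smlink_familyPair m, smlink_familyLink m⟩
end
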